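/- Let a,b ∈ ℤ³, let i,j ∈ {1,2,3} be distinct, let k,l ∈ {1,2,3} be distinct, and let m be the unique index with {i,j,m} = {1,2,3}. Then π(T(a;i,j)) = π(T(b;k,l)) if and only if there exists n ∈ ℤ such that the pair (b,(k,l)) equals (a + n𝟙, (i,j)), or (a + eᵢ + n𝟙, (j,m)), or (a − e_m + n𝟙, (m,i)). In particular, up to translation by integer multiples of 𝟙, exactly three slant triangles project onto any given flat triangle. -/

import Mathlib

/-!
A lattice point whose projection lies in `π(T(a;i,j))` can be slid along `ℝ𝟙` into `T(a;i,j)`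
itself, because `T(a;i,j)` lies in the coordinate plane `yₘ = aₘ`; and the only lattice points of
`T(a;i,j)` are its vertices. So the flat triangle determines the projected vertices of every slant
triangle over it. Projected lattice points are classified by `ℤ³/ℤ𝟙 ≅ ℤ²`, where the vertex set of
`T(a;i,j)` becomes a translate of `{0, ēᵢ, ēᵢ + ēⱼ}`, and comparing two such three-point sets is a
finite check.
-/

noncomputable section

/-- Ambient space ℝ³. -/
abbrev E3 := EuclideanSpace ℝ (Fin 3)

/-- Standard basis vector eᵢ of ℝ³. -/
def ee3 (i : Fin 3) : E3 := EuclideanSpace.single i 1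

/-- 𝟙 = e₁ + e₂ + e₃. -/
def ones3 : E3 := ∑ i, ee3 i

/-- Orthogonal projection π onto the hyperplane H = {v ∈ ℝ³ : v₁+v₂+v₃ = 0},
    given by π(v) = v − ((v₁+v₂+v₃)/3)·𝟙. -/
def proj3 (v : E3) : E3 := v - ((∑ i, v i) / 3) • ones3

/-- A lattice point of ℤ³ viewed in ℝ³. -/
def toE3 (a : Fin 3 → ℤ) : E3 := WithLp.toLp 2 (fun n => (a n : ℝ))

/-- Slant triangle T(a;i,j) = conv{a, a+eᵢ, a+eᵢ+eⱼ}. -/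
def slant3 (a : Fin 3 → ℤ) (i j : Fin 3) : Set E3 :=
  convexHull ℝ {toE3 a, toE3 a + ee3 i, toE3 a + ee3 i + ee3 j}

/-- Flat triangle: the image π(T(a;i,j)). -/
def flat3 (a : Fin 3 → ℤ) (i j : Fin 3) : Set E3 := proj3 '' slant3 a i j

open Pointwise

lemma image_eq_image_iff_of_eq_iff_eq {α β γ : Type*} {f : α → β} {g : α → γ}
    (h : ∀ x y, f x = f y ↔ g x = g y) {s t : Set α} : f '' s = f '' t ↔ g '' s = g '' t := by
  simp only [Set.Subset.antisymm_iff, Set.image_subset_iff]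
  simp only [Set.subset_def, Set.mem_preimage, Set.mem_image, h]

lemma ones3_apply (t : Fin 3) : ones3 t = 1 := by
  fin_cases t <;> simp [ones3, ee3, Fin.sum_univ_three]

lemma toE3_add (x y : Fin 3 → ℤ) : toE3 (x + y) = toE3 x + toE3 y := by
  ext t; simp [toE3]

lemma toE3_single (i : Fin 3) : toE3 (Pi.single i 1) = ee3 i := by
  ext t; by_cases h : t = i <;> simp [toE3, ee3, h]

lemma toE3_add_zsmul_one (x : Fin 3 → ℤ) (n : ℤ) :
    toE3 (x + n • 1) = toE3 x + (n : ℝ) • ones3 := by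
  ext t; simp [toE3, ones3_apply]

lemma isLinearMap_proj3 : IsLinearMap ℝ proj3 where
  map_add v w := by
    simp only [proj3, PiLp.add_apply, Finset.sum_add_distrib, add_div, add_smul]; abel
  map_smul c v := by
    simp only [proj3, PiLp.smul_apply, smul_eq_mul, ← Finset.mul_sum, mul_div_assoc, smul_sub,
      smul_smul]

lemma proj3_ones3 : proj3 ones3 = 0 := by
  simp [proj3, ones3_apply]

lemma proj3_eq_proj3_iff (v w : E3) : proj3 v = proj3 w ↔ ∃ c : ℝ, w = v + c • ones3 := by
  constructor
  · intro h
    refine ⟨(∑ t, w t) / 3 - (∑ t, v t) / 3, ?_⟩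
    simp only [proj3] at h
    rw [sub_smul]
    linear_combination (norm := module) -h
  · rintro ⟨c, rfl⟩
    rw [isLinearMap_proj3.map_add, isLinearMap_proj3.map_smul, proj3_ones3, smul_zero, add_zero]

lemma proj3_toE3_eq_iff (x y : Fin 3 → ℤ) :
    proj3 (toE3 x) = proj3 (toE3 y) ↔ ∃ n : ℤ, y = x + n • 1 := by
  rw [proj3_eq_proj3_iff]
  constructor
  · rintro ⟨c, hc⟩
    have hc' (t : Fin 3) : (y t : ℝ) = x t + c := by
      simpa [toE3, ones3_apply] using congrArg (· t) hc
    refine ⟨y 0 - x 0, funext fun t => ?_⟩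
    simp only [Pi.add_apply, Pi.smul_apply, Pi.one_apply, smul_eq_mul, mul_one]
    exact_mod_cast (by linarith [hc' t, hc' 0] : (y t : ℝ) = x t + (y 0 - x 0))
  · rintro ⟨n, rfl⟩
    exact ⟨n, toE3_add_zsmul_one x n⟩

def slantVertices (a : Fin 3 → ℤ) (i j : Fin 3) : Set (Fin 3 → ℤ) :=
  {a, a + Pi.single i 1, a + Pi.single i 1 + Pi.single j 1}

lemma slant3_eq_convexHull_image (a : Fin 3 → ℤ) (i j : Fin 3) :
    slant3 a i j = convexHull ℝ (toE3 '' slantVertices a i j) := by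
  simp [slant3, slantVertices, Set.image_insert_eq, toE3_add, toE3_single]

lemma flat3_eq_convexHull_image (a : Fin 3 → ℤ) (i j : Fin 3) :
    flat3 a i j = convexHull ℝ ((proj3 ∘ toE3) '' slantVertices a i j) := by
  rw [flat3, slant3_eq_convexHull_image, isLinearMap_proj3.image_convexHull, Set.image_comp]

lemma slant3_subset_setOf {a : Fin 3 → ℤ} {i j : Fin 3} (hij : i ≠ j) :
    slant3 a i j ⊆ {y | (∀ t, t ≠ i → t ≠ j → y t = a t) ∧
      0 ≤ y j - a j ∧ y j - a j ≤ y i - a i ∧ y i - a i ≤ 1} := by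
  refine convexHull_min ?_ ?_
  · rintro y (rfl | rfl | rfl) <;>
      simp +contextual [toE3, ee3, hij, hij.symm, add_comm]
  · rintro y ⟨hy, hy₁, hy₂, hy₃⟩ z ⟨hz, hz₁, hz₂, hz₃⟩ s t hs ht hst
    obtain rfl : t = 1 - s := by linarith
    simp only [Set.mem_ofPred_eq, PiLp.add_apply, PiLp.smul_apply, smul_eq_mul]
    refine ⟨fun r hri hrj => ?_, ?_, ?_, ?_⟩
    · rw [hy r hri hrj, hz r hri hrj]; ring
    · nlinarith [mul_nonneg hs hy₁, mul_nonneg ht hz₁]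
    · nlinarith [mul_nonneg hs (sub_nonneg.2 hy₂), mul_nonneg ht (sub_nonneg.2 hz₂)]
    · nlinarith [mul_nonneg hs (sub_nonneg.2 hy₃), mul_nonneg ht (sub_nonneg.2 hz₃)]

lemma toE3_mem_slant3_iff {a : Fin 3 → ℤ} {i j : Fin 3} (hij : i ≠ j) (z : Fin 3 → ℤ) :
    toE3 z ∈ slant3 a i j ↔ z ∈ slantVertices a i j := by
  refine ⟨fun hz => ?_, fun hz => ?_⟩
  · obtain ⟨hrest, hj₀, hji, hi₁⟩ := slant3_subset_setOf hij hz
    simp only [toE3] at hrest hj₀ hji hi₁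
    have hrest' (t : Fin 3) (hti : t ≠ i) (htj : t ≠ j) : z t = a t := by
      exact_mod_cast hrest t hti htj
    have hj₀' : a j ≤ z j := by exact_mod_cast sub_nonneg.1 hj₀
    have hji' : z j - a j ≤ z i - a i := by exact_mod_cast hji
    have hi₁' : z i ≤ a i + 1 := by exact_mod_cast (by linarith : (z i : ℝ) ≤ a i + 1)
    have hcoord (t : Fin 3) : z t = a t + (Pi.single i (z i - a i) : Fin 3 → ℤ) t +
        (Pi.single j (z j - a j) : Fin 3 → ℤ) t := by
      by_cases hti : t = i <;> by_cases htj : t = j <;> simp_all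
    simp only [slantVertices, Set.mem_insert_iff, Set.mem_singleton_iff, funext_iff]
    rcases (by omega : z i = a i ∧ z j = a j ∨ z i = a i + 1 ∧ z j = a j ∨
        z i = a i + 1 ∧ z j = a j + 1) with ⟨hi, hj⟩ | ⟨hi, hj⟩ | ⟨hi, hj⟩
    · left; intro t; simpa [hi, hj] using hcoord t
    · right; left; intro t; simpa [hi, hj] using hcoord t
    · right; right; intro t; simpa [hi, hj] using hcoord t
  · rw [slant3_eq_convexHull_image]
    exact subset_convexHull ℝ _ (Set.mem_image_of_mem _ hz)

lemma range_inter_flat3_eq_image {a : Fin 3 → ℤ} {i j : Fin 3} (hij : i ≠ j) :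
    Set.range (proj3 ∘ toE3) ∩ flat3 a i j = (proj3 ∘ toE3) '' slantVertices a i j := by
  obtain ⟨m, hmi, hmj⟩ : ∃ m : Fin 3, m ≠ i ∧ m ≠ j := by revert i j; decide
  refine subset_antisymm ?_ ?_
  · rintro _ ⟨⟨x, rfl⟩, y, hy, hyx⟩
    obtain ⟨c, hc⟩ := (proj3_eq_proj3_iff _ _).1 hyx
    have hym : y m = a m := (slant3_subset_setOf hij hy).1 m hmi hmj
    have hc' (t : Fin 3) : (x t : ℝ) = y t + c := by
      simpa [toE3, ones3_apply] using congrArg (· t) hc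
    have hy' : y = toE3 (x - (x m - a m) • 1) := by
      ext t; simp [toE3]; linarith [hc' t, hc' m]
    refine ⟨x - (x m - a m) • 1, (toE3_mem_slant3_iff hij _).1 (hy' ▸ hy), ?_⟩
    exact (proj3_toE3_eq_iff _ _).2 ⟨x m - a m, by abel⟩
  · rintro _ ⟨z, hz, rfl⟩
    exact ⟨Set.mem_range_self z, Set.mem_image_of_mem _ ((toE3_mem_slant3_iff hij z).2 hz)⟩

lemma flat3_eq_flat3_iff {a b : Fin 3 → ℤ} {i j k l : Fin 3} (hij : i ≠ j) (hkl : k ≠ l) :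
    flat3 a i j = flat3 b k l ↔
      (proj3 ∘ toE3) '' slantVertices a i j = (proj3 ∘ toE3) '' slantVertices b k l := by
  refine ⟨fun h => ?_, fun h => by rw [flat3_eq_convexHull_image, h, flat3_eq_convexHull_image]⟩
  rw [← range_inter_flat3_eq_image hij, h, range_inter_flat3_eq_image hkl]

/-- Coordinates on `ℤ³/ℤ𝟙`. -/
def planeCoord : (Fin 3 → ℤ) →+ ℤ × ℤ where
  toFun x := (x 0 - x 2, x 1 - x 2)
  map_zero' := rfl
  map_add' x y := by ext <;> simp only [Pi.add_apply, Prod.fst_add, Prod.snd_add] <;> ring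

lemma planeCoord_eq_iff (x y : Fin 3 → ℤ) :
    planeCoord x = planeCoord y ↔ ∃ n : ℤ, y = x + n • 1 := by
  simp only [planeCoord, AddMonoidHom.coe_mk, ZeroHom.coe_mk, Prod.mk.injEq]
  constructor
  · rintro ⟨h₀, h₁⟩
    refine ⟨y 2 - x 2, funext fun t => ?_⟩
    fin_cases t <;> simp <;> omega
  · rintro ⟨n, rfl⟩
    simp

def baseTriangle (i j : Fin 3) : Finset (ℤ × ℤ) :=
  {0, planeCoord (Pi.single i 1), planeCoord (Pi.single i 1 + Pi.single j 1)}

lemma planeCoord_image_slantVertices (a : Fin 3 → ℤ) (i j : Fin 3) :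
    planeCoord '' slantVertices a i j = ↑(planeCoord a +ᵥ baseTriangle i j) := by
  simp [slantVertices, baseTriangle, Set.image_insert_eq, Finset.vadd_finset_insert, add_assoc]

lemma baseTriangle_eq_vadd_baseTriangle_iff {i j m k l : Fin 3} (hij : i ≠ j)
    (hm : ({i, j, m} : Finset (Fin 3)) = Finset.univ) (hkl : k ≠ l) (d : ℤ × ℤ) :
    baseTriangle i j = d +ᵥ baseTriangle k l ↔
      (d = 0 ∧ (k, l) = (i, j)) ∨ (d = planeCoord (Pi.single i 1) ∧ (k, l) = (j, m)) ∨
        (d = planeCoord (-Pi.single m 1) ∧ (k, l) = (m, i)) := by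
  by_cases hd : d ∈ baseTriangle i j
  · revert hij hm hkl d; revert i j m k l; decide
  have hm' : planeCoord (-Pi.single m 1) ∈ baseTriangle i j := by
    clear hd; revert hij hm; revert i j m; decide
  refine iff_of_false (fun h => hd ?_) ?_
  · have h₀ : (0 : ℤ × ℤ) ∈ baseTriangle k l := by simp [baseTriangle]
    simpa [h] using Finset.vadd_mem_vadd_finset (a := d) h₀
  · rintro (⟨rfl, -⟩ | ⟨rfl, -⟩ | ⟨rfl, -⟩) <;> simp_all [baseTriangle]

lemma neg_add_planeCoord_eq_iff (a b v : Fin 3 → ℤ) :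
    -planeCoord a + planeCoord b = planeCoord v ↔ ∃ n : ℤ, b = a + v + n • 1 := by
  rw [neg_add_eq_iff_eq_add, ← map_add, eq_comm, planeCoord_eq_iff]

/-- π(T(a;i,j)) = π(T(b;k,l)) iff (b,(k,l)) is, for some n ∈ ℤ,
(a+n𝟙,(i,j)), (a+eᵢ+n𝟙,(j,m)) or (a−e_m+n𝟙,(m,i)), where m is the remaining index. -/
theorem stmt1 (a b : Fin 3 → ℤ) (i j m k l : Fin 3)
    (hij : i ≠ j) (hm : ({i, j, m} : Finset (Fin 3)) = Finset.univ)
    (hkl : k ≠ l) :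
    flat3 a i j = flat3 b k l ↔
      ∃ n : ℤ,
        (b = a + n • (1 : Fin 3 → ℤ) ∧ (k, l) = (i, j)) ∨
        (b = a + Pi.single i 1 + n • (1 : Fin 3 → ℤ) ∧ (k, l) = (j, m)) ∨
        (b = a - Pi.single m 1 + n • (1 : Fin 3 → ℤ) ∧ (k, l) = (m, i)) := by
  have hP (x y : Fin 3 → ℤ) :
      (proj3 ∘ toE3) x = (proj3 ∘ toE3) y ↔ planeCoord x = planeCoord y :=
    (proj3_toE3_eq_iff x y).trans (planeCoord_eq_iff x y).symm
  rw [flat3_eq_flat3_iff hij hkl, image_eq_image_iff_of_eq_iff_eq hP,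
    planeCoord_image_slantVertices, planeCoord_image_slantVertices, Finset.coe_inj,
    vadd_eq_iff_eq_neg_vadd, vadd_vadd, baseTriangle_eq_vadd_baseTriangle_iff hij hm hkl,
    ← map_zero planeCoord, neg_add_planeCoord_eq_iff, neg_add_planeCoord_eq_iff,
    neg_add_planeCoord_eq_iff]
  simp only [add_zero, ← sub_eq_add_neg, ← exists_and_right, ← exists_or]
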